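/- Let e^{(k)} : {0,...,T} → ℝ be a SOC trajectory satisfying (i) e^{(k)}_t ≥ e̲_t for all t, and (ii) M_t := max_{1≤r<t} [e^{(k)}_r - ē_r]_+ ≤ e^{(k)}_t - e̲_t for all t ≥ 2. Suppose the trajectory is updated by subtracting δ ≥ 0 from all e_j with j ≥ s (for some time s), where δ ≤ min_{s≤j≤T}(e^{(k)}_j - e̲_j) - max_{1≤j≤s-1}[e^{(k)}_j - ē_j]_+. Then the updated trajectory also satisfies (i) and (ii). In other words, the invariants 'all SOCs above lower bounds' and 'every prior upper-bound violation is repairable' are preserved by such suffix decrements. -/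
import Mathlib

/-- The invariants "all SOCs above lower bounds" and "every
prior upper-bound violation is repairable" are preserved by suffix
decrements with suitably bounded step size `δ`. -/
theorem stmt_12 (T : ℕ) (e ebar elow : ℕ → ℝ)
    (hb : ∀ t, elow t ≤ ebar t)
    (h1 : ∀ t, t ≤ T → elow t ≤ e t)
    (h2 : ∀ t, 2 ≤ t → t ≤ T → ∀ r, 1 ≤ r → r < t →
      max (e r - ebar r) 0 ≤ e t - elow t)
    (s : ℕ) (hs1 : 1 ≤ s) (hsT : s ≤ T)
    (δ : ℝ) (hδ0 : 0 ≤ δ)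
    (hδmin : ∀ j, s ≤ j → j ≤ T → δ ≤ e j - elow j)
    (hδrep : ∀ j, s ≤ j → j ≤ T → ∀ i, 1 ≤ i → i < s →
      δ + max (e i - ebar i) 0 ≤ e j - elow j) :
    let e' : ℕ → ℝ := fun j => if s ≤ j then e j - δ else e j
    (∀ t, t ≤ T → elow t ≤ e' t) ∧
    (∀ t, 2 ≤ t → t ≤ T → ∀ r, 1 ≤ r → r < t →
      max (e' r - ebar r) 0 ≤ e' t - elow t) := by
  intro e'
  constructor
  · intro t htT
    simp only [e']
    by_cases hst : s ≤ t
    · simp only [hst, if_true]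
      have := hδmin t hst htT
      linarith
    · simp only [hst, if_false]
      exact h1 t htT
  · intro t ht2 htT r hr1 hrt
    simp only [e']
    by_cases hsr : s ≤ r
    · have hst : s ≤ t := le_trans hsr (le_of_lt hrt)
      simp only [hsr, hst, if_true]
      rcases le_or_gt (e r - δ - ebar r) 0 with h | h
      · rw [max_eq_right h]
        have := hδmin t hst htT
        linarith
      · rw [max_eq_left (le_of_lt h)]
        have h2' := h2 t ht2 htT r hr1 hrt
        have : e r - ebar r ≤ e t - elow t := le_trans (le_max_left _ _) h2'
        linarith
    · simp only [hsr, if_false]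
      push_neg at hsr
      by_cases hst : s ≤ t
      · simp only [hst, if_true]
        have := hδrep t hst htT r hr1 hsr
        linarith
      · simp only [hst, if_false]
        exact h2 t ht2 htT r hr1 hrt
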